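/- Let T be a measure-preserving ergodic map on a probability space (X, ℱ, μ) and ζ a finite measurable partition of X. Then the lower local rate of Poincaré recurrence R̲_ζ and the upper local rate R̄_ζ are constant μ-almost everywhere. -/

import Mathlib

/-! Both rates can only decrease along orbits: `T` maps `ζ_{n+1}(x)` into `ζ_n(T x)`, and `τ`
is antitone and does not increase under images, so `τ(ζ_n(T x)) ≤ τ(ζ_{n+1}(x))`; the shift
from `n + 1` to `n` is invisible in `liminf τ/n` and `limsup τ/n`. A measurable function that
does not increase along an ergodic map of a finite measure space is a.e. constant, since each
of its sublevel sets is then almost invariant. -/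

open MeasureTheory Filter Set
open scoped ENNReal

/-- The Poincaré recurrence of a set `U` : `τ(U) = inf {k ≥ 1 : T^k U ∩ U ≠ ∅}`
(`∞` if no such `k` exists). -/
noncomputable def recOfSet {X : Type*} (T : X → X) (U : Set X) : ℝ≥0∞ :=
  sInf {t : ℝ≥0∞ | ∃ k : ℕ, 1 ≤ k ∧ (T^[k] '' U ∩ U).Nonempty ∧ t = k}

/-- `refAtom T P n x` is the atom containing `x` of the refined partition
`ζ ∨ T⁻¹ζ ∨ ⋯ ∨ T^{-n+1}ζ`, where `ζ` is the partition of `X` into the fibers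
of the map `P`. -/
def refAtom {X ι : Type*} (T : X → X) (P : X → ι) (n : ℕ) (x : X) : Set X :=
  {y | ∀ k < n, P (T^[k] y) = P (T^[k] x)}

/-- The lower local rate of Poincaré recurrence `R̲_ζ(x) = liminf_n τ(ζ_n(x))/n`. -/
noncomputable def lowerRate {X ι : Type*} (T : X → X) (P : X → ι) (x : X) : ℝ≥0∞ :=
  atTop.liminf fun n : ℕ => recOfSet T (refAtom T P n x) / (n : ℝ≥0∞)

/-- The upper local rate of Poincaré recurrence `R̄_ζ(x) = limsup_n τ(ζ_n(x))/n`. -/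
noncomputable def upperRate {X ι : Type*} (T : X → X) (P : X → ι) (x : X) : ℝ≥0∞ :=
  atTop.limsup fun n : ℕ => recOfSet T (refAtom T P n x) / (n : ℝ≥0∞)

theorem Ergodic.exists_ae_eq_const_of_apply_le {X Y : Type*} [MeasurableSpace X]
    {μ : Measure X} [IsFiniteMeasure μ] [TopologicalSpace Y] [LinearOrder Y] [OrderTopology Y]
    [SecondCountableTopology Y] [MeasurableSpace Y] [OpensMeasurableSpace Y] [Nonempty Y]
    {T : X → X} (hT : Ergodic T μ) {g : X → Y} (hg : Measurable g) (hle : ∀ x, g (T x) ≤ g x) :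
    ∃ c, g =ᵐ[μ] Function.const X c := by
  refine exists_eventuallyEq_const_of_forall_separating (· ∈ range (Iic : Y → Set Y)) ?_
  rintro _ ⟨b, rfl⟩
  have hs : NullMeasurableSet (g ⁻¹' Iic b) μ := (hg measurableSet_Iic).nullMeasurableSet
  have hsub : g ⁻¹' Iic b ⊆ T ⁻¹' (g ⁻¹' Iic b) := fun x hx => (hle x).trans hx
  exact hT.quasiErgodic.ae_mem_or_ae_notMem₀ hs
    (ae_eq_of_subset_of_measure_ge hsub (hT.measure_preimage hs).le hs (measure_ne_top _ _)).symm

namespace ENNReal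

-- Also at `n = 0`, where both sides are `b * ∞`.
lemma succ_div_natCast_mul_div_succ (b : ℝ≥0∞) (n : ℕ) :
    ((n : ℝ≥0∞) + 1) / n * (b / (n + 1)) = b / n := by
  have hcancel : ((n : ℝ≥0∞) + 1) * ((n : ℝ≥0∞) + 1)⁻¹ = 1 :=
    ENNReal.mul_inv_cancel (by simp) (by simp)
  calc ((n : ℝ≥0∞) + 1) / n * (b / (n + 1))
      = b * (n : ℝ≥0∞)⁻¹ * (((n : ℝ≥0∞) + 1) * ((n : ℝ≥0∞) + 1)⁻¹) := by
        simp only [div_eq_mul_inv]; ring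
    _ = b / n := by rw [hcancel, mul_one, div_eq_mul_inv]

lemma tendsto_succ_div_natCast : Tendsto (fun n : ℕ => ((n : ℝ≥0∞) + 1) / n) atTop (nhds 1) := by
  have : Tendsto (fun n : ℕ => 1 + (n : ℝ≥0∞)⁻¹) atTop (nhds 1) := by
    simpa using tendsto_const_nhds.add ENNReal.tendsto_inv_nat_nhds_zero
  refine this.congr' ((eventually_ne_atTop 0).mono fun n hn => ?_)
  dsimp only
  rw [ENNReal.add_div, ENNReal.div_self (Nat.cast_ne_zero.2 hn) (natCast_ne_top n), one_div]

lemma liminf_succ_div_natCast_le (a : ℕ → ℝ≥0∞) :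
    atTop.liminf (fun n : ℕ => a (n + 1) / n) ≤ atTop.liminf (fun n : ℕ => a n / n) := by
  have hlim := tendsto_succ_div_natCast.limsup_eq
  calc atTop.liminf (fun n : ℕ => a (n + 1) / n)
      = atTop.liminf ((fun n : ℕ => ((n : ℝ≥0∞) + 1) / n) * fun n => a (n + 1) / (n + 1)) := by
        congr 1; ext n; exact (succ_div_natCast_mul_div_succ _ _).symm
    _ ≤ atTop.limsup (fun n : ℕ => ((n : ℝ≥0∞) + 1) / n) *
          atTop.liminf (fun n : ℕ => a (n + 1) / (n + 1)) :=
        liminf_mul_le (.inl (by simp [hlim])) (.inl (by simp [hlim]))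
    _ = atTop.liminf (fun n : ℕ => a n / n) := by
        rw [hlim, one_mul, ← liminf_nat_add (fun n : ℕ => a n / n) 1]; push_cast; rfl

lemma limsup_succ_div_natCast_le (a : ℕ → ℝ≥0∞) :
    atTop.limsup (fun n : ℕ => a (n + 1) / n) ≤ atTop.limsup (fun n : ℕ => a n / n) := by
  have hlim := tendsto_succ_div_natCast.limsup_eq
  calc atTop.limsup (fun n : ℕ => a (n + 1) / n)
      = atTop.limsup ((fun n : ℕ => ((n : ℝ≥0∞) + 1) / n) * fun n => a (n + 1) / (n + 1)) := by
        congr 1; ext n; exact (succ_div_natCast_mul_div_succ _ _).symm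
    _ ≤ atTop.limsup (fun n : ℕ => ((n : ℝ≥0∞) + 1) / n) *
          atTop.limsup (fun n : ℕ => a (n + 1) / (n + 1)) :=
        limsup_mul_le' (.inl (by simp [hlim])) (.inl (by simp [hlim]))
    _ = atTop.limsup (fun n : ℕ => a n / n) := by
        rw [hlim, one_mul, ← limsup_nat_add (fun n : ℕ => a n / n) 1]; push_cast; rfl

end ENNReal

section Recurrence

variable {X ι : Type*} (T : X → X) (P : X → ι)

lemma recOfSet_antitone : Antitone (recOfSet T) := by
  intro U V h
  apply sInf_le_sInf
  rintro t ⟨k, hk, ⟨z, hzV, hzU⟩, rfl⟩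
  exact ⟨k, hk, ⟨z, image_mono h hzV, h hzU⟩, rfl⟩

lemma recOfSet_image_le (U : Set X) : recOfSet T (T '' U) ≤ recOfSet T U := by
  apply sInf_le_sInf
  rintro t ⟨k, hk, ⟨_, ⟨u, hu, rfl⟩, hz⟩, rfl⟩
  refine ⟨k, hk, ⟨T (T^[k] u), ⟨T u, mem_image_of_mem T hu, ?_⟩, mem_image_of_mem T hz⟩, rfl⟩
  rw [← Function.iterate_succ_apply, Function.iterate_succ_apply']

lemma image_refAtom_succ_subset (n : ℕ) (x : X) :
    T '' refAtom T P (n + 1) x ⊆ refAtom T P n (T x) := by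
  rintro _ ⟨y, hy, rfl⟩ k hk
  simpa only [Function.iterate_succ_apply] using hy (k + 1) (by omega)

lemma recOfSet_refAtom_apply_le (n : ℕ) (x : X) :
    recOfSet T (refAtom T P n (T x)) ≤ recOfSet T (refAtom T P (n + 1) x) :=
  (recOfSet_antitone T (image_refAtom_succ_subset T P n x)).trans (recOfSet_image_le T _)

lemma lowerRate_apply_le (x : X) : lowerRate T P (T x) ≤ lowerRate T P x := by
  refine le_trans ?_ (ENNReal.liminf_succ_div_natCast_le fun n => recOfSet T (refAtom T P n x))
  exact liminf_le_liminf (.of_forall fun n =>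
    ENNReal.div_le_div_right (recOfSet_refAtom_apply_le T P n x) _)

lemma upperRate_apply_le (x : X) : upperRate T P (T x) ≤ upperRate T P x := by
  refine le_trans ?_ (ENNReal.limsup_succ_div_natCast_le fun n => recOfSet T (refAtom T P n x))
  exact limsup_le_limsup (.of_forall fun n =>
    ENNReal.div_le_div_right (recOfSet_refAtom_apply_le T P n x) _)

variable [MeasurableSpace X] [Countable ι] {T P}

lemma measurable_recOfSet_refAtom (hT : Measurable T) (hP : ∀ i, MeasurableSet (P ⁻¹' {i}))
    (n : ℕ) : Measurable fun x => recOfSet T (refAtom T P n x) := by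
  -- with the discrete σ-algebra on `ι`, every function of the itinerary is measurable
  let _ : MeasurableSpace ι := ⊤
  have hPm : Measurable P := measurable_to_countable' hP
  have hfactor : (fun x => recOfSet T (refAtom T P n x)) =
      (fun c : Fin n → ι => recOfSet T {y | ∀ k : Fin n, P (T^[k] y) = c k}) ∘
        fun x k => P (T^[k] x) := by
    ext x
    simp [refAtom, Fin.forall_iff]
  rw [hfactor]
  exact (measurable_of_countable _).comp (measurable_pi_lambda _ fun k => hPm.comp (hT.iterate k))

lemma measurable_lowerRate (hT : Measurable T) (hP : ∀ i, MeasurableSet (P ⁻¹' {i})) :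
    Measurable (lowerRate T P) :=
  .liminf fun n => (measurable_recOfSet_refAtom hT hP n).div_const _

lemma measurable_upperRate (hT : Measurable T) (hP : ∀ i, MeasurableSet (P ⁻¹' {i})) :
    Measurable (upperRate T P) :=
  .limsup fun n => (measurable_recOfSet_refAtom hT hP n).div_const _

end Recurrence

/-- For an ergodic measure-preserving map of a probability space and
a finite measurable partition, the lower and upper local rates of Poincaré
recurrence are almost everywhere constant. -/
theorem stmt2 {X ι : Type*} [MeasurableSpace X] [Fintype ι]
    (μ : Measure X) [IsProbabilityMeasure μ]
    (T : X → X) (hT : Ergodic T μ)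
    (P : X → ι) (hP : ∀ i, MeasurableSet (P ⁻¹' {i})) :
    ∃ c C : ℝ≥0∞,
      (∀ᵐ x ∂μ, lowerRate T P x = c) ∧ (∀ᵐ x ∂μ, upperRate T P x = C) := by
  obtain ⟨c, hc⟩ := hT.exists_ae_eq_const_of_apply_le (measurable_lowerRate hT.measurable hP)
    (lowerRate_apply_le T P)
  obtain ⟨C, hC⟩ := hT.exists_ae_eq_const_of_apply_le (measurable_upperRate hT.measurable hP)
    (upperRate_apply_le T P)
  exact ⟨c, C, hc, hC⟩
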